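/- For every sequence {q_n} of positive real numbers, the inequality q_n * p_{n+1} - q_{n+1} * p_n < p_n holds for infinitely many values of n, where p_n denotes the n-th prime. -/

import Mathlib

/-!
If the inequality failed for all large `n`, dividing by `p n * p (n + 1)` would give
`1 / p (n + 1) ≤ q n / p n - q (n + 1) / p (n + 1)`, so the partial sums of `∑ 1 / p n` would
telescope and stay bounded by `q N / p N`. This is the divergence half of Kummer's test with
`a_n = p_n`, and it contradicts the divergence of the sum of prime reciprocals.
-/

open Filter

/-- `p n` is the `n`-th prime number (1-indexed), as a real number. -/
noncomputable def p (n : ℕ) : ℝ := Nat.nth Nat.Prime (n - 1)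

theorem summable_of_le_sub_succ {b c : ℕ → ℝ} (hb : ∀ n, 0 ≤ b n) (hc : ∀ n, 0 ≤ c n)
    (h : ∀ n, c n ≤ b n - b (n + 1)) : Summable c := by
  refine summable_of_sum_range_le (c := b 0) hc fun m => ?_
  calc ∑ i ∈ Finset.range m, c i
      ≤ ∑ i ∈ Finset.range m, (b i - b (i + 1)) := Finset.sum_le_sum fun i _ => h i
    _ = b 0 - b m := Finset.sum_range_sub' b m
    _ ≤ b 0 := sub_le_self _ (hb m)

theorem summable_of_eventually_le_sub_succ {b c : ℕ → ℝ} (hb : ∀ n, 0 ≤ b n)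
    (hc : ∀ n, 0 ≤ c n) (h : ∀ᶠ n in atTop, c n ≤ b n - b (n + 1)) : Summable c := by
  obtain ⟨N, hN⟩ := eventually_atTop.mp h
  refine (summable_nat_add_iff N).mp <|
    summable_of_le_sub_succ (fun n => hb (n + N)) (fun n => hc (n + N)) fun n => ?_
  simpa only [Nat.add_right_comm n 1 N] using hN (n + N) (Nat.le_add_left N n)

theorem infinite_setOf_mul_succ_sub_lt_of_not_summable {a q : ℕ → ℝ} (ha : ∀ n, 0 < a n)
    (hq : ∀ n, 0 ≤ q n) (hdiv : ¬Summable fun n => 1 / a n) :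
    {n | q n * a (n + 1) - q (n + 1) * a n < a n}.Infinite := by
  by_contra hfin
  rw [← Nat.frequently_atTop_iff_infinite, not_frequently] at hfin
  refine hdiv <| (summable_nat_add_iff 1).mp <|
    summable_of_eventually_le_sub_succ (b := fun n => q n / a n)
      (fun n => div_nonneg (hq n) (ha n).le) (fun n => (one_div_pos.mpr (ha _)).le) ?_
  filter_upwards [hfin] with n hn
  have han := ha n
  have han' := ha (n + 1)
  rw [not_lt] at hn
  rw [div_sub_div _ _ han.ne' han'.ne', div_le_div_iff₀ han' (mul_pos han han')]
  nlinarith [mul_le_mul_of_nonneg_right hn han'.le]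

theorem not_summable_one_div_nth_prime :
    ¬Summable fun n => 1 / (Nat.nth Nat.Prime n : ℝ) := by
  have hprimes := not_summable_one_div_on_primes
  rw [← (Nat.nth_injective Nat.infinite_setOfPred_prime).summable_iff fun n hn =>
    Set.indicator_of_notMem (by rwa [← Nat.range_nth_of_infinite Nat.infinite_setOfPred_prime]) _]
    at hprimes
  simpa [Function.comp_def, Nat.prime_nth_prime] using hprimes

theorem p_pos (n : ℕ) : 0 < p n := by
  unfold p
  exact_mod_cast (Nat.prime_nth_prime (n - 1)).pos

theorem main_gap_inequality (q : ℕ → ℝ) (hq : ∀ n, 0 < q n) :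
    {n : ℕ | q n * p (n + 1) - q (n + 1) * p n < p n}.Infinite := by
  refine infinite_setOf_mul_succ_sub_lt_of_not_summable p_pos (fun n => (hq n).le) fun h => ?_
  exact not_summable_one_div_nth_prime <| (summable_nat_add_iff 1).mpr h
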